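/- Let A be a self-adjoint endomorphism of an n-dimensional real inner product space whose eigenvalues are all positive. Then every Newton transformation T_r of A, 0 ≤ r ≤ n-1, is positive definite. -/

import Mathlib

open Finset

/-- The `r`-th elementary symmetric polynomial of the values of `x` on the index set `s`
(`s_0 = 1` by convention). -/
noncomputable def esymm {n : ℕ} (s : Finset (Fin n)) (r : ℕ) (x : Fin n → ℝ) : ℝ :=
  ∑ t ∈ s.powersetCard r, ∏ i ∈ t, x i

/-- The Newton transformations of an endomorphism `A`, relative to the invariants `S`:
`T_0 = I`, `T_r = S_r • I - A ∘ T_{r-1}`. -/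
noncomputable def newton {E : Type*} [AddCommGroup E] [Module ℝ E]
    (A : Module.End ℝ E) (S : ℕ → ℝ) : ℕ → Module.End ℝ E
  | 0 => 1
  | r + 1 => S (r + 1) • 1 - A * newton A S r

lemma esymm_insert {n : ℕ} {i : Fin n} {s : Finset (Fin n)} (hi : i ∉ s) (r : ℕ)
    (κ : Fin n → ℝ) :
    esymm (insert i s) (r + 1) κ = esymm s (r + 1) κ + κ i * esymm s r κ := by
  rw [esymm, powersetCard_succ_insert hi, sum_union, esymm, esymm, mul_sum, sum_image]
  · congr 1
    refine sum_congr rfl fun t ht => ?_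
    rw [prod_insert fun hmem => hi ((mem_powersetCard.mp ht).1 hmem)]
  · intro a ha b hb hab
    have ha' : i ∉ a := fun h => hi ((mem_powersetCard.mp ha).1 h)
    have hb' : i ∉ b := fun h => hi ((mem_powersetCard.mp hb).1 h)
    have : (insert i a).erase i = (insert i b).erase i := by rw [hab]
    rwa [erase_insert ha', erase_insert hb'] at this
  · rw [disjoint_left]
    intro t ht ht'
    obtain ⟨u, hu, rfl⟩ := mem_image.mp ht'
    exact hi ((mem_powersetCard.mp ht).1 (mem_insert_self i u))

lemma esymm_split {n : ℕ} (i : Fin n) (r : ℕ) (κ : Fin n → ℝ) :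
    esymm univ (r + 1) κ = esymm (univ.erase i) (r + 1) κ +
      κ i * esymm (univ.erase i) r κ := by
  rw [← esymm_insert (notMem_erase i univ) r κ, insert_erase (mem_univ i)]

lemma esymm_pos {n : ℕ} (s : Finset (Fin n)) (r : ℕ) (hr : r ≤ s.card)
    (κ : Fin n → ℝ) (hpos : ∀ i, 0 < κ i) : 0 < esymm s r κ := by
  apply sum_pos
  · intro t _
    exact prod_pos fun i _ => hpos i
  · obtain ⟨t, ht, hcard⟩ := Finset.exists_subset_card_eq hr
    exact ⟨t, mem_powersetCard.mpr ⟨ht, hcard⟩⟩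

lemma newton_apply {E : Type*} [NormedAddCommGroup E] [InnerProductSpace ℝ E]
    [FiniteDimensional ℝ E] {n : ℕ}
    (A : Module.End ℝ E) (κ : Fin n → ℝ) (v : OrthonormalBasis (Fin n) ℝ E)
    (hv : ∀ i, A (v i) = κ i • v i) (r : ℕ) (i : Fin n) :
    newton A (fun j => esymm univ j κ) r (v i) = esymm (univ.erase i) r κ • v i := by
  induction r with
  | zero =>
    simp [newton, esymm]
  | succ r ih =>
    have h1 : (A * newton A (fun j => esymm univ j κ) r) (v i)
        = (κ i * esymm (univ.erase i) r κ) • v i := by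
      simp only [Module.End.mul_apply, ih, map_smul, hv, smul_smul, mul_comm]
    simp only [newton, LinearMap.sub_apply, LinearMap.smul_apply, Module.End.one_apply, h1]
    rw [esymm_split i r κ, add_smul, add_sub_cancel_right]

/-- If `A` is a self-adjoint endomorphism of an `n`-dimensional real inner product space whose
eigenvalues are all positive, then every Newton transformation `T_r`, `0 ≤ r ≤ n-1`, is
positive definite: `⟨T_r x, x⟩ > 0` for all nonzero `x`. -/
theorem stmt_11 {E : Type*} [NormedAddCommGroup E] [InnerProductSpace ℝ E]
    [FiniteDimensional ℝ E] (n : ℕ) (hdim : Module.finrank ℝ E = n)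
    (A : Module.End ℝ E) (hA : LinearMap.IsSymmetric (A : E →ₗ[ℝ] E))
    (κ : Fin n → ℝ) (v : OrthonormalBasis (Fin n) ℝ E)
    (hv : ∀ i, A (v i) = κ i • v i) (hpos : ∀ i, 0 < κ i) :
    ∀ r, r ≤ n - 1 → ∀ x : E, x ≠ 0 →
      0 < (inner ℝ (newton A (fun j => esymm univ j κ) r x) x : ℝ) := by
  intro r hr x hx
  set S : ℕ → ℝ := fun j => esymm univ j κ with hS
  have hrepr : x = ∑ i, (v.repr x i) • v i := (v.sum_repr x).symm
  have hvi : ∀ i : Fin n, (inner ℝ (v i) x : ℝ) = v.repr x i :=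
    fun i => (v.repr_apply_apply x i).symm
  have key : (inner ℝ (newton A S r x) x : ℝ)
      = ∑ i, esymm (univ.erase i) r κ * (v.repr x i)^2 := by
    conv_lhs => rw [hrepr, map_sum, sum_inner]
    refine sum_congr rfl fun i _ => ?_
    rw [map_smul, newton_apply A κ v hv r i, real_inner_smul_left, real_inner_smul_left,
      ← hrepr, hvi i]
    ring
  rw [key]
  have hcard : ∀ i : Fin n, r ≤ (univ.erase i).card := by
    intro i
    rw [card_erase_of_mem (mem_univ i), card_univ, Fintype.card_fin]
    exact hr
  apply sum_pos'
  · intro i _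
    exact mul_nonneg (esymm_pos _ r (hcard i) κ hpos).le (sq_nonneg _)
  · have hex : ∃ i, v.repr x i ≠ 0 := by
      by_contra h
      push_neg at h
      apply hx
      have h0 : v.repr x = 0 := by ext i; simpa using h i
      simpa using congrArg v.repr.symm h0
    obtain ⟨i, hi⟩ := hex
    exact ⟨i, mem_univ i, mul_pos (esymm_pos _ r (hcard i) κ hpos)
      (by positivity)⟩
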